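/- (Part of Theorem F.1) For every bipartite stochastic graph G = (U,V,E), LPOPT_new(G) ≤ LPOPT_std(G). -/
import Mathlib


open Finset

/-- A bipartite stochastic graph on offline vertices `U` and online vertices `V`,
with edge probabilities `p`, edge weights `w` and patience values `patience`. -/
structure StochasticGraph (U V : Type) [Fintype U] [Fintype V] [DecidableEq U] where
  p : U → V → ℝ
  w : U → V → ℝ
  patience : V → ℕ
  p_nonneg : ∀ u v, 0 ≤ p u v
  p_le_one : ∀ u v, p u v ≤ 1
  w_nonneg : ∀ u v, 0 ≤ w u v
  patience_pos : ∀ v, 1 ≤ patience v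

/-- `Tup U ℓ` encodes `U^{(≤ℓ)}`, the tuples of pairwise-distinct elements of `U`
of length between `1` and `ℓ`: a tuple of length `j+1` (for `j < ℓ`) is an injection
`Fin (j+1) ↪ U`. -/
abbrev Tup (U : Type) (ℓ : ℕ) := Σ j : Fin ℓ, (Fin (j.1 + 1) ↪ U)

variable {U V : Type} [Fintype U] [Fintype V] [DecidableEq U] [DecidableEq V]

/-- `g_v^i(u) = p_{u_i,v} · ∏_{j<i} (1 − p_{u_j,v})`: the probability that `(u_i,v)` is
the first active edge when the edges of the tuple `u` are probed in order. -/
noncomputable def gval (G : StochasticGraph U V) (v : V) {ℓ : ℕ} (u : Tup U ℓ)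
    (i : Fin (u.1.1 + 1)) : ℝ :=
  G.p (u.2 i) v * ∏ j ∈ Finset.univ.filter (fun j => j < i), (1 - G.p (u.2 j) v)

/-- Contribution `Σ_i w_{u_i,v}·g_v^i(u)` of the tuple `u` at online vertex `v` to the
LP-new objective. -/
noncomputable def objTerm (G : StochasticGraph U V) (v : V)
    (u : Tup U (G.patience v)) : ℝ :=
  ∑ i, G.w (u.2 i) v * gval G v u i

/-- Feasibility for LP-new: nonnegativity, the per-online-vertex distribution
constraint, and the per-offline-vertex matching constraint. -/
def FeasNew (G : StochasticGraph U V) (x : ∀ v : V, Tup U (G.patience v) → ℝ) : Prop :=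
  (∀ v u, 0 ≤ x v u) ∧
  (∀ v, ∑ u, x v u ≤ 1) ∧
  (∀ u0 : U, ∑ v, ∑ u : Tup U (G.patience v), ∑ i,
      (if u.2 i = u0 then gval G v u i * x v u else 0) ≤ 1)

/-- The LP-new objective. -/
noncomputable def objNew (G : StochasticGraph U V)
    (x : ∀ v : V, Tup U (G.patience v) → ℝ) : ℝ :=
  ∑ v, ∑ u, objTerm G v u * x v u

/-- `LPOPT_new(G)`: the optimum value of LP-new. -/
noncomputable def LPOPTnew (G : StochasticGraph U V) : ℝ :=
  sSup {r | ∃ x, FeasNew G x ∧ objNew G x = r}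

/-- The induced stochastic graph `G[S]` obtained by restricting the online vertices
to `S ⊆ V`. -/
def StochasticGraph.restrict (G : StochasticGraph U V) (S : Finset V) :
    StochasticGraph U {v : V // v ∈ S} where
  p := fun u v => G.p u v.1
  w := fun u v => G.w u v.1
  patience := fun v => G.patience v.1
  p_nonneg := fun u v => G.p_nonneg u v.1
  p_le_one := fun u v => G.p_le_one u v.1
  w_nonneg := fun u v => G.w_nonneg u v.1
  patience_pos := fun v => G.patience_pos v.1

/-- The induced edge variables `x̃_{u,v}` of a LP-new solution:
`x̃_{u,v} = Σ_i Σ_{u*: u*_i = u} (∏_{j<i}(1 − p_{u*_j,v}))·x_v(u*)`, so that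
`p_{u,v}·x̃_{u,v} = Σ_i Σ_{u*: u*_i = u} g_v^i(u*)·x_v(u*)`. -/
noncomputable def edgeVar (G : StochasticGraph U V)
    (x : ∀ v : V, Tup U (G.patience v) → ℝ) (u0 : U) (v : V) : ℝ :=
  ∑ u : Tup U (G.patience v), ∑ i,
    (if u.2 i = u0 then
      (∏ j ∈ Finset.univ.filter (fun j => j < i), (1 - G.p (u.2 j) v)) * x v u
    else 0)

/-- Feasibility for LP-std (one-sided, bipartite). -/
def FeasStd (G : StochasticGraph U V) (y : U → V → ℝ) : Prop :=
  (∀ u v, 0 ≤ y u v) ∧ (∀ u v, y u v ≤ 1) ∧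
  (∀ u, ∑ v, G.p u v * y u v ≤ 1) ∧
  (∀ v, ∑ u, G.p u v * y u v ≤ 1) ∧
  (∀ v, ∑ u, y u v ≤ (G.patience v : ℝ))

/-- The LP-std objective. -/
noncomputable def objStd (G : StochasticGraph U V) (y : U → V → ℝ) : ℝ :=
  ∑ u, ∑ v, G.w u v * G.p u v * y u v

/-- `LPOPT_std(G)`: the optimum value of LP-std. -/
noncomputable def LPOPTstd (G : StochasticGraph U V) : ℝ :=
  sSup {r | ∃ y, FeasStd G y ∧ objStd G y = r}


private lemma my_geom_sum_eq (n : ℕ) (q : Fin n → ℝ) :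
    ∑ i, q i * ∏ j ∈ Finset.univ.filter (fun j => j < i), (1 - q j)
      = 1 - ∏ i, (1 - q i) := by
  induction n with
  | zero => simp
  | succ n ih =>
    rw [Fin.sum_univ_succ, Fin.prod_univ_succ]
    have h0 : (Finset.univ.filter (fun j : Fin (n+1) => j < 0)) = ∅ := by
      simp
    rw [h0]
    have hsucc : ∀ i : Fin n,
        q i.succ * ∏ j ∈ Finset.univ.filter (fun j => j < i.succ), (1 - q j)
          = (1 - q 0) * (q i.succ *
            ∏ j ∈ Finset.univ.filter (fun j => j < i), (1 - q j.succ)) := by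
      intro i
      rw [Finset.prod_filter, Finset.prod_filter, Fin.prod_univ_succ]
      simp only [Fin.succ_pos, if_pos, Fin.succ_lt_succ_iff]
      ring
    rw [Finset.sum_congr rfl (fun i _ => hsucc i), ← Finset.mul_sum, ih (fun i => q i.succ)]
    simp
    ring

private lemma my_prod_nonneg (G : StochasticGraph U V) (v : V) {ℓ : ℕ} (u : Tup U ℓ)
    (i : Fin (u.1.1 + 1)) :
    0 ≤ ∏ j ∈ Finset.univ.filter (fun j => j < i), (1 - G.p (u.2 j) v) :=
  Finset.prod_nonneg fun j _ => by linarith [G.p_le_one (u.2 j) v]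

private lemma my_prod_le_one (G : StochasticGraph U V) (v : V) {ℓ : ℕ} (u : Tup U ℓ)
    (i : Fin (u.1.1 + 1)) :
    ∏ j ∈ Finset.univ.filter (fun j => j < i), (1 - G.p (u.2 j) v) ≤ 1 :=
  Finset.prod_le_one (fun j _ => by linarith [G.p_le_one (u.2 j) v])
    (fun j _ => by linarith [G.p_nonneg (u.2 j) v])

private lemma my_gval_nonneg (G : StochasticGraph U V) (v : V) {ℓ : ℕ} (u : Tup U ℓ)
    (i : Fin (u.1.1 + 1)) : 0 ≤ gval G v u i :=
  mul_nonneg (G.p_nonneg _ _) (my_prod_nonneg G v u i)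

private lemma my_sum_gval_le_one (G : StochasticGraph U V) (v : V) {ℓ : ℕ} (u : Tup U ℓ) :
    ∑ i, gval G v u i ≤ 1 := by
  unfold gval
  rw [my_geom_sum_eq (u.1.1 + 1) (fun i => G.p (u.2 i) v)]
  have : (0:ℝ) ≤ ∏ i : Fin (u.1.1 + 1), (1 - G.p (u.2 i) v) :=
    Finset.prod_nonneg fun j _ => by linarith [G.p_le_one (u.2 j) v]
  linarith

private lemma my_sum_collapse (G : StochasticGraph U V) (v : V)
    (f : ∀ u : Tup U (G.patience v), Fin (u.1.1 + 1) → ℝ) :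
    ∑ u0 : U, ∑ u : Tup U (G.patience v), ∑ i, (if u.2 i = u0 then f u i else 0)
      = ∑ u : Tup U (G.patience v), ∑ i, f u i := by
  rw [Finset.sum_comm]
  refine Finset.sum_congr rfl fun u _ => ?_
  rw [Finset.sum_comm]
  refine Finset.sum_congr rfl fun i _ => ?_
  simp [Finset.sum_ite_eq]

private lemma my_mul_edgeVar (G : StochasticGraph U V)
    (x : ∀ v : V, Tup U (G.patience v) → ℝ) (c : U → ℝ) (u0 : U) (v : V) :
    c u0 * (G.p u0 v * edgeVar G x u0 v)
      = ∑ u : Tup U (G.patience v), ∑ i,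
          (if u.2 i = u0 then c (u.2 i) * (gval G v u i * x v u) else 0) := by
  unfold edgeVar
  simp only [Finset.mul_sum, mul_ite, mul_zero]
  refine Finset.sum_congr rfl fun u _ => Finset.sum_congr rfl fun i _ => ?_
  split_ifs with h
  · unfold gval; rw [h]; ring
  · rfl

private lemma my_p_mul_edgeVar (G : StochasticGraph U V)
    (x : ∀ v : V, Tup U (G.patience v) → ℝ) (u0 : U) (v : V) :
    G.p u0 v * edgeVar G x u0 v
      = ∑ u : Tup U (G.patience v), ∑ i,
          (if u.2 i = u0 then gval G v u i * x v u else 0) := by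
  have := my_mul_edgeVar G x (fun _ => 1) u0 v
  simpa using this

private lemma my_edgeVar_nonneg (G : StochasticGraph U V)
    (x : ∀ v : V, Tup U (G.patience v) → ℝ) (hx : ∀ v u, 0 ≤ x v u) (u0 : U) (v : V) :
    0 ≤ edgeVar G x u0 v := by
  unfold edgeVar
  refine Finset.sum_nonneg fun u _ => Finset.sum_nonneg fun i _ => ?_
  split_ifs
  · exact mul_nonneg (my_prod_nonneg G v u i) (hx v u)
  · exact le_refl 0

private lemma my_inner_le (G : StochasticGraph U V)
    (x : ∀ v : V, Tup U (G.patience v) → ℝ) (hx : ∀ v u, 0 ≤ x v u) (u0 : U) (v : V)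
    (u : Tup U (G.patience v)) :
    ∑ i, (if u.2 i = u0 then
        (∏ j ∈ Finset.univ.filter (fun j => j < i), (1 - G.p (u.2 j) v)) * x v u
      else 0) ≤ x v u := by
  classical
  rw [← Finset.sum_filter]
  set s := Finset.univ.filter (fun i : Fin (u.1.1 + 1) => u.2 i = u0) with hs
  have hcard : s.card ≤ 1 := by
    refine Finset.card_le_one.mpr fun a ha b hb => ?_
    simp only [hs, Finset.mem_filter] at ha hb
    exact u.2.injective (ha.2.trans hb.2.symm)
  calc ∑ i ∈ s, (∏ j ∈ Finset.univ.filter (fun j => j < i), (1 - G.p (u.2 j) v)) * x v u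
      ≤ ∑ _i ∈ s, x v u := by
        refine Finset.sum_le_sum fun i _ => ?_
        exact mul_le_of_le_one_left (hx v u) (my_prod_le_one G v u i)
    _ = s.card * x v u := by rw [Finset.sum_const, nsmul_eq_mul]
    _ ≤ 1 * x v u := by
        apply mul_le_mul_of_nonneg_right _ (hx v u)
        exact_mod_cast hcard
    _ = x v u := one_mul _

/-- Part of Theorem F.1: `LPOPT_new(G) ≤ LPOPT_std(G)` for every bipartite
stochastic graph `G`. -/
theorem LPOPTnew_le_LPOPTstd (G : StochasticGraph U V) :
    LPOPTnew G ≤ LPOPTstd G := by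
  classical
  have hbdd : BddAbove {r | ∃ y, FeasStd G y ∧ objStd G y = r} := by
    refine ⟨∑ u, ∑ v, G.w u v * G.p u v, ?_⟩
    rintro r ⟨y, ⟨hy0, hy1, _, _, _⟩, rfl⟩
    refine Finset.sum_le_sum fun u _ => Finset.sum_le_sum fun v _ => ?_
    exact mul_le_of_le_one_right
      (mul_nonneg (G.w_nonneg u v) (G.p_nonneg u v)) (hy1 u v)
  have hne : {r | ∃ x, FeasNew G x ∧ objNew G x = r}.Nonempty := by
    refine ⟨0, fun _ _ => 0, ⟨fun v u => le_refl 0, fun v => by simp, fun u0 => by simp⟩, ?_⟩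
    simp [objNew]
  refine csSup_le hne ?_
  rintro r ⟨x, ⟨hx0, hx1, hx2⟩, rfl⟩
  refine le_csSup hbdd ⟨edgeVar G x, ⟨?_, ?_, ?_, ?_, ?_⟩, ?_⟩
  · exact my_edgeVar_nonneg G x hx0
  · -- edgeVar ≤ 1
    intro u0 v
    calc edgeVar G x u0 v ≤ ∑ u : Tup U (G.patience v), x v u :=
          Finset.sum_le_sum fun u _ => my_inner_le G x hx0 u0 v u
      _ ≤ 1 := hx1 v
  · -- offline constraint
    intro u0
    calc ∑ v, G.p u0 v * edgeVar G x u0 v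
        = ∑ v, ∑ u : Tup U (G.patience v), ∑ i,
            (if u.2 i = u0 then gval G v u i * x v u else 0) :=
          Finset.sum_congr rfl fun v _ => my_p_mul_edgeVar G x u0 v
      _ ≤ 1 := hx2 u0
  · -- online probability constraint
    intro v
    calc ∑ u0, G.p u0 v * edgeVar G x u0 v
        = ∑ u0, ∑ u : Tup U (G.patience v), ∑ i,
            (if u.2 i = u0 then gval G v u i * x v u else 0) :=
          Finset.sum_congr rfl fun u0 _ => my_p_mul_edgeVar G x u0 v
      _ = ∑ u : Tup U (G.patience v), ∑ i, gval G v u i * x v u :=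
          my_sum_collapse G v _
      _ = ∑ u : Tup U (G.patience v), (∑ i, gval G v u i) * x v u := by
          simp [Finset.sum_mul]
      _ ≤ ∑ u : Tup U (G.patience v), x v u := by
          refine Finset.sum_le_sum fun u _ => ?_
          exact mul_le_of_le_one_left (hx0 v u) (my_sum_gval_le_one G v u)
      _ ≤ 1 := hx1 v
  · -- patience constraint
    intro v
    calc ∑ u0, edgeVar G x u0 v
        = ∑ u : Tup U (G.patience v), ∑ i,
            (∏ j ∈ Finset.univ.filter (fun j => j < i), (1 - G.p (u.2 j) v)) * x v u :=
          my_sum_collapse G v _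
      _ ≤ ∑ u : Tup U (G.patience v), (G.patience v : ℝ) * x v u := by
          refine Finset.sum_le_sum fun u _ => ?_
          rw [← Finset.sum_mul]
          refine mul_le_mul_of_nonneg_right ?_ (hx0 v u)
          calc ∑ i, ∏ j ∈ Finset.univ.filter (fun j => j < i), (1 - G.p (u.2 j) v)
              ≤ ∑ _i : Fin (u.1.1 + 1), (1:ℝ) :=
                Finset.sum_le_sum fun i _ => my_prod_le_one G v u i
            _ = (u.1.1 + 1 : ℝ) := by simp
            _ ≤ (G.patience v : ℝ) := by exact_mod_cast u.1.2
      _ = (G.patience v : ℝ) * ∑ u : Tup U (G.patience v), x v u := by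
          rw [Finset.mul_sum]
      _ ≤ (G.patience v : ℝ) * 1 :=
          mul_le_mul_of_nonneg_left (hx1 v) (Nat.cast_nonneg _)
      _ = (G.patience v : ℝ) := mul_one _
  · -- objective equality
    unfold objStd
    rw [Finset.sum_comm]
    unfold objNew
    refine Finset.sum_congr rfl fun v _ => ?_
    calc ∑ u0, G.w u0 v * G.p u0 v * edgeVar G x u0 v
        = ∑ u0, G.w u0 v * (G.p u0 v * edgeVar G x u0 v) := by
          simp [mul_assoc]
      _ = ∑ u0, ∑ u : Tup U (G.patience v), ∑ i,
            (if u.2 i = u0 then G.w (u.2 i) v * (gval G v u i * x v u) else 0) :=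
          Finset.sum_congr rfl fun u0 _ => my_mul_edgeVar G x (fun a => G.w a v) u0 v
      _ = ∑ u : Tup U (G.patience v), ∑ i, G.w (u.2 i) v * (gval G v u i * x v u) :=
          my_sum_collapse G v _
      _ = ∑ u, objTerm G v u * x v u := by
          refine Finset.sum_congr rfl fun u _ => ?_
          unfold objTerm
          rw [Finset.sum_mul]
          exact Finset.sum_congr rfl fun i _ => by ring
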